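/- For every integer k ≥ 3 and all distinct α, β ∈ {1,...,k+1}, there exists a (p,α)-CGC of G^5_k(p,q) in which q is colored with β, and there exists a (q,β)-CGC of G^5_k(p,q) in which p is colored with α. -/

import Mathlib

open SimpleGraph

/-- One step of the greedy coloring algorithm: color the vertex `w` with the smallest
positive integer not already used on one of its (already colored) neighbours.
Color `0` means "not yet colored". -/
noncomputable def greedyStep {V : Type*} [DecidableEq V] (G : SimpleGraph V)
    (f : V → ℕ) (w : V) : V → ℕ :=
  Function.update f w (sInf {n : ℕ | 0 < n ∧ ∀ z, G.Adj w z → f z ≠ n})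

/-- The coloring obtained by greedily coloring the vertices of the list `l` in order,
starting from the partial coloring `f₀`. -/
noncomputable def greedyFrom {V : Type*} [DecidableEq V] (G : SimpleGraph V)
    (f₀ : V → ℕ) (l : List V) : V → ℕ :=
  l.foldl (greedyStep G) f₀

/-- The greedy coloring of the ordering `l` (all vertices initially uncolored). -/
noncomputable def greedy {V : Type*} [DecidableEq V] (G : SimpleGraph V)
    (l : List V) : V → ℕ :=
  greedyFrom G (fun _ => 0) l

/-- `l` is a connected ordering of the vertices of `G`: it lists every vertex exactly once,
and every vertex other than the first has a neighbour occurring earlier in the list. -/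
def IsConnectedOrder {V : Type*} (G : SimpleGraph V) (l : List V) : Prop :=
  l.Nodup ∧ (∀ w : V, w ∈ l) ∧
    ∀ i : Fin l.length, 0 < (i : ℕ) →
      ∃ j : Fin l.length, (j : ℕ) < (i : ℕ) ∧ G.Adj (l.get i) (l.get j)

/-- `f` is a connected greedy coloring (CGC) of `G`. -/
def IsCGC {V : Type*} [DecidableEq V] (G : SimpleGraph V) (f : V → ℕ) : Prop :=
  ∃ l : List V, IsConnectedOrder G l ∧ f = greedy G l

/-- `f` is an `(x, α)`-connected greedy coloring of `G`: it is obtained from a connected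
ordering starting at `x` by coloring `x` with `α` and then coloring each subsequent
vertex with the smallest positive integer not appearing on its already-colored
neighbours. -/
def IsCGCFrom {V : Type*} [DecidableEq V] (G : SimpleGraph V) (x : V) (α : ℕ)
    (f : V → ℕ) : Prop :=
  ∃ l : List V, IsConnectedOrder G (x :: l) ∧
    f = greedyFrom G (Function.update (fun _ => 0) x α) l

/-- `f` uses exactly `k` colors. -/
def UsesColors {V : Type*} (f : V → ℕ) (k : ℕ) : Prop :=
  ∃ s : Finset ℕ, (∀ w, f w ∈ s) ∧ (∀ c ∈ s, ∃ w, f w = c) ∧ s.card = k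

/-- The connected chromatic number of `G`: the least `k` such that some connected greedy
coloring of `G` only uses colors in `{1, …, k}`. -/
noncomputable def connChrom {V : Type*} [DecidableEq V] (G : SimpleGraph V) : ℕ :=
  sInf {k | ∃ f, IsCGC G f ∧ ∀ w, f w ≤ k}

/-- The vertices of the gadget `G^5_k(p,q)`: the path `(p, x, y, z)`, a clique `P` of
size `k - 1`, a clique `Q` of size `k`, and the vertex `q`. -/
inductive G5Vert (k : ℕ) where
  | p : G5Vert k
  | x : G5Vert k
  | y : G5Vert k
  | z : G5Vert k
  | q : G5Vert k
  | P : Fin (k - 1) → G5Vert k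
  | Q : Fin k → G5Vert k
deriving DecidableEq

/-- The gadget `G^5_k(p,q)`: `(p, x, y, z)` is a path, `P` and `Q` are cliques,
each of `p, x, y, z` is complete to `P`, and each of `z, q` is complete to `Q`. -/
def G5 (k : ℕ) : SimpleGraph (G5Vert k) :=
  SimpleGraph.fromRel (fun a b =>
    (a = G5Vert.p ∧ b = G5Vert.x) ∨
    (a = G5Vert.x ∧ b = G5Vert.y) ∨
    (a = G5Vert.y ∧ b = G5Vert.z) ∨
    (∃ i j, a = G5Vert.P i ∧ b = G5Vert.P j) ∨
    (∃ i j, a = G5Vert.Q i ∧ b = G5Vert.Q j) ∨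
    (∃ i, (a = G5Vert.p ∨ a = G5Vert.x ∨ a = G5Vert.y ∨ a = G5Vert.z) ∧ b = G5Vert.P i) ∨
    (∃ i, (a = G5Vert.z ∨ a = G5Vert.q) ∧ b = G5Vert.Q i))

/-!
Starting at `p` with colour `α`, colour first `m` vertices of `P`; they greedily take the `m`
smallest colours other than `α`, and `m` is chosen so that these are exactly the positive
integers below `β` other than `α`. Then `x` receives `β`, `y` receives `α` or `β + 1`, and `z`
receives `β` again. The only colour the clique `Q` sees is `β` (on `z`), so it takes every
colour of `{1, …, k + 1}` except `β`, which leaves `β` for `q`.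

Starting at `q` with colour `β`, the clique `Q` again takes `{1, …, k + 1}` minus `β`, so `z`
receives `β`, and the same argument along the path `z, y, x, p`, with `α` and `β` exchanged,
gives `p` the colour `α`.
-/

noncomputable def firstFree (S : Set ℕ) : ℕ := sInf {n | 0 < n ∧ n ∉ S}

theorem firstFree_eq {S : Set ℕ} {n : ℕ} (hn : 0 < n) (hnS : n ∉ S)
    (hlt : ∀ m, 0 < m → m < n → m ∈ S) : firstFree S = n :=
  le_antisymm (Nat.sInf_le ⟨hn, hnS⟩) <| le_csInf ⟨n, hn, hnS⟩ fun m ⟨hm, hmS⟩ =>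
    not_lt.1 fun hmn => hmS (hlt m hm hmn)

theorem firstFree_sdiff_zero (S : Set ℕ) : firstFree (S \ {0}) = firstFree S := by
  unfold firstFree
  congr 1
  ext n
  simp +contextual [Nat.pos_iff_ne_zero]

theorem image_sdiff_zero_of_subset {V : Type*} {f : V → ℕ} {L K : Set V} (hLK : L ⊆ K)
    (h0 : ∀ v ∈ K, v ∉ L → f v = 0) : f '' K \ {0} = f '' L \ {0} := by
  refine subset_antisymm ?_ (Set.sdiff_subset_sdiff_left (Set.image_mono hLK))
  rintro _ ⟨⟨v, hv, rfl⟩, hv0⟩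
  by_cases hvL : v ∈ L
  · exact ⟨⟨v, hvL, rfl⟩, hv0⟩
  · exact absurd (h0 v hv hvL) hv0

section Greedy

variable {V : Type*} [DecidableEq V] (G : SimpleGraph V)

theorem greedyStep_self (f : V → ℕ) (w : V) :
    greedyStep G f w w = firstFree (f '' G.neighborSet w) := by
  rw [greedyStep, Function.update_self, firstFree]
  congr 1
  ext n
  simp

theorem greedyStep_of_ne (f : V → ℕ) {v w : V} (h : w ≠ v) : greedyStep G f v w = f w :=
  Function.update_of_ne h _ _

theorem image_greedyStep_of_notMem (f : V → ℕ) {w : V} {K : Set V} (hw : w ∉ K) :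
    greedyStep G f w '' K = f '' K :=
  Set.image_congr fun _ hv => greedyStep_of_ne G f fun h => hw (h ▸ hv)

theorem greedyFrom_append (f : V → ℕ) (l₁ l₂ : List V) :
    greedyFrom G f (l₁ ++ l₂) = greedyFrom G (greedyFrom G f l₁) l₂ :=
  List.foldl_append

theorem greedyFrom_of_notMem (f : V → ℕ) {w : V} {l : List V} (h : w ∉ l) :
    greedyFrom G f l w = f w := by
  induction l generalizing f with
  | nil => rfl
  | cons v l ih =>
    rw [List.mem_cons, not_or] at h
    exact (ih _ h.2).trans (greedyStep_of_ne G f h.1)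

/-- The `j` smallest positive integers other than `a`. -/
def firstColorsExcept (a j : ℕ) : Set ℕ := {c | 0 < c ∧ c ≠ a ∧ c ≤ j + 1 ∧ (c ≤ j ∨ a ≤ j)}

theorem firstColorsExcept_zero {a : ℕ} (ha : 0 < a) : firstColorsExcept a 0 = ∅ := by
  ext c
  simp only [firstColorsExcept, Set.mem_ofPred_eq, Set.mem_empty_iff_false, iff_false]
  omega

theorem insert_firstFree_firstColorsExcept (a j : ℕ) :
    insert (firstFree (insert a (firstColorsExcept a j))) (firstColorsExcept a j)
      = firstColorsExcept a (j + 1) := by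
  have hfree : firstFree (insert a (firstColorsExcept a j))
      = if a ≤ j + 1 then j + 2 else j + 1 := by
    split_ifs <;> apply firstFree_eq <;> simp [firstColorsExcept] <;> omega
  ext c
  rw [hfree]
  simp only [firstColorsExcept, Set.mem_insert_iff, Set.mem_ofPred_eq]
  split_ifs <;> omega

theorem firstFree_firstColorsExcept {b k : ℕ} (hb : 0 < b) (hbk : b ≤ k + 1) :
    firstFree (firstColorsExcept b k) = b :=
  firstFree_eq hb (by simp [firstColorsExcept]) fun m hm hmb => by
    simp only [firstColorsExcept, Set.mem_ofPred_eq]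
    omega

theorem image_greedyFrom_clique {l : List V} (hnd : l.Nodup) (hcl : l.Pairwise G.Adj)
    {f : V → ℕ} {a : ℕ} (ha : 0 < a) (hf : ∀ v ∈ l, f v = 0)
    (hout : ∀ v ∈ l, ∀ u, G.Adj v u → u ∉ l → f u = 0 ∨ f u = a)
    (hseen : ∀ v ∈ l, ∃ u, G.Adj v u ∧ f u = a) :
    greedyFrom G f l '' {v | v ∈ l} = firstColorsExcept a l.length := by
  induction l using List.reverseRecOn with
  | nil => simp [firstColorsExcept_zero ha]
  | append_singleton l v ih =>
    obtain ⟨hndl, -, hvl⟩ := List.nodup_append.1 hnd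
    have hvl : v ∉ l := fun h => hvl v h v (by simp) rfl
    obtain ⟨hcll, -, hlv⟩ := List.pairwise_append.1 hcl
    have hlv : ∀ u ∈ l, G.Adj v u := fun u hu => (hlv u hu v (by simp)).symm
    set g := greedyFrom G f l
    have hgf : ∀ u ∉ l, g u = f u := fun u hu => greedyFrom_of_notMem G f hu
    have hg := ih hndl hcll (fun w hw => hf w (by simp [hw]))
      (fun w hw u hwu hul => by
        by_cases huv : u = v
        · exact Or.inl (hf u (by simp [huv]))
        · exact hout w (by simp [hw]) u hwu (by simp [hul, huv]))
      (fun w hw => hseen w (by simp [hw]))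
    have hcolors : g '' G.neighborSet v \ {0} = insert a (g '' {w | w ∈ l}) := by
      ext c
      constructor
      · rintro ⟨⟨u, hu, rfl⟩, hc⟩
        by_cases hul : u ∈ l
        · exact Or.inr ⟨u, hul, rfl⟩
        · rw [hgf u hul] at hc ⊢
          have hu' : u ∉ l ++ [v] := by simp [hul, (G.ne_of_adj hu).symm]
          exact Or.inl ((hout v (by simp) u hu hu').resolve_left hc)
      · rintro (rfl | ⟨u, hul, rfl⟩)
        · obtain ⟨u, hu, hfu⟩ := hseen v (by simp)
          have hul : u ∉ l := fun h => by rw [hf u (by simp [h])] at hfu; omega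
          exact ⟨⟨u, hu, by rw [hgf u hul, hfu]⟩, ha.ne'⟩
        · have hpos : 0 < g u := by
            have : g u ∈ g '' {w | w ∈ l} := ⟨u, hul, rfl⟩
            rw [hg] at this
            exact this.1
          exact ⟨⟨u, hlv u hul, rfl⟩, hpos.ne'⟩
    have hset : {w | w ∈ l ++ [v]} = insert v {w | w ∈ l} := by
      ext w
      simp [or_comm]
    rw [greedyFrom_append, List.length_append, List.length_singleton, hset, Set.image_insert_eq]
    change insert (greedyStep G g v v) (greedyStep G g v '' {w | w ∈ l}) = _
    have hgl : greedyStep G g v '' {w | w ∈ l} = g '' {w | w ∈ l} :=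
      Set.image_congr fun w hw => greedyStep_of_ne G g fun h => hvl (h ▸ hw)
    rw [hgl, greedyStep_self, ← firstFree_sdiff_zero, hcolors, hg,
      insert_firstFree_firstColorsExcept]

def belowExcept (a b : ℕ) : Set ℕ := {c | 0 < c ∧ c < b ∧ c ≠ a}

/-- The number of elements of `belowExcept a b`. -/
def numBelowExcept (a b : ℕ) : ℕ := if a < b then b - 2 else b - 1

theorem firstColorsExcept_numBelowExcept {a b : ℕ} (ha : 0 < a) :
    firstColorsExcept a (numBelowExcept a b) = belowExcept a b := by
  ext c
  simp only [firstColorsExcept, numBelowExcept, belowExcept, Set.mem_ofPred_eq]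
  split_ifs <;> omega

theorem firstFree_insert_belowExcept {a b : ℕ} (hb : 0 < b) (hab : a ≠ b) :
    firstFree (insert a (belowExcept a b)) = b :=
  firstFree_eq hb (by simp [belowExcept]; omega) fun m hm hmb => by simp [belowExcept]; omega

theorem firstFree_insert_self_belowExcept {a b : ℕ} (ha : 0 < a) (hb : 0 < b) :
    firstFree (insert b (belowExcept a b)) = if a < b then a else b + 1 := by
  split_ifs <;> refine firstFree_eq (by omega) ?_ fun m hm hmb => ?_ <;>
    simp [belowExcept] <;> omega

theorem firstFree_insert_ite_belowExcept {a b : ℕ} (hb : 0 < b) :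
    firstFree (insert (if a < b then a else b + 1) (belowExcept a b)) = b := by
  refine firstFree_eq hb ?_ fun m hm hmb => ?_ <;> simp [belowExcept] <;> split_ifs <;> omega

/-- `w₁, w₂, w₃` receive `b`, then `a` or `b + 1`, then `b` again. -/
theorem greedyFrom_path_of_common_neighbours {w₀ w₁ w₂ w₃ : V} {K U : Set V} {f : V → ℕ}
    {a b : ℕ} (ha : 0 < a) (hb : 0 < b) (hab : a ≠ b)
    (hN₁ : G.neighborSet w₁ = {w₀, w₂} ∪ K) (hN₂ : G.neighborSet w₂ = {w₁, w₃} ∪ K)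
    (hN₃ : G.neighborSet w₃ = insert w₂ (K ∪ U))
    (h₁ : w₁ ∉ K ∪ U) (h₂ : w₂ ∉ K ∪ U) (h₃ : w₃ ≠ w₁)
    (hf₀ : f w₀ = a) (hf₂ : f w₂ = 0) (hf₃ : f w₃ = 0)
    (hK : f '' K \ {0} = belowExcept a b) (hU : ∀ u ∈ U, f u = 0) :
    greedyFrom G f [w₁, w₂, w₃] w₃ = b := by
  have hc₁ : greedyStep G f w₁ w₁ = b := by
    rw [greedyStep_self, hN₁, ← firstFree_sdiff_zero, Set.image_union,
      Set.union_sdiff_distrib, hK, Set.image_pair, hf₀, hf₂]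
    simpa [ha.ne'] using firstFree_insert_belowExcept hb hab
  have hc₂ : greedyStep G (greedyStep G f w₁) w₂ w₂ = if a < b then a else b + 1 := by
    rw [greedyStep_self, hN₂, ← firstFree_sdiff_zero, Set.image_union, Set.union_sdiff_distrib,
      image_greedyStep_of_notMem G f fun h => h₁ (Or.inl h), hK, Set.image_pair, hc₁,
      greedyStep_of_ne G f h₃, hf₃]
    simpa [hb.ne'] using firstFree_insert_self_belowExcept ha hb
  have hU' : f '' U \ {0} = ∅ := by
    simpa [Set.sdiff_eq_empty] using hU
  change greedyStep G (greedyStep G (greedyStep G f w₁) w₂) w₃ w₃ = b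
  rw [greedyStep_self, hN₃, ← firstFree_sdiff_zero, Set.image_insert_eq,
    image_greedyStep_of_notMem G _ h₂, image_greedyStep_of_notMem G f h₁, hc₂,
    Set.insert_sdiff_of_notMem _ (by split_ifs <;> simp [ha.ne']), Set.image_union,
    Set.union_sdiff_distrib, hK, hU', Set.union_empty]
  exact firstFree_insert_ite_belowExcept hb

end Greedy

section ConnectedOrder

variable {V : Type*} {G : SimpleGraph V}

variable (G) in
def HasEarlierNeighbours (l : List V) : Prop :=
  ∀ i : Fin l.length, 0 < (i : ℕ) → ∃ j : Fin l.length, (j : ℕ) < i ∧ G.Adj (l.get i) (l.get j)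

variable (G) in
theorem hasEarlierNeighbours_singleton (v : V) : HasEarlierNeighbours G [v] := by
  rintro ⟨i, hi⟩ (hpos : 0 < i)
  rw [List.length_singleton] at hi
  omega

theorem HasEarlierNeighbours.append_of_adj {l₁ l₂ : List V} (h : HasEarlierNeighbours G l₁)
    {u : V} (hu : u ∈ l₁) (hadj : ∀ v ∈ l₂, G.Adj v u) : HasEarlierNeighbours G (l₁ ++ l₂) := by
  rintro ⟨i, hi⟩ hpos
  by_cases hil : i < l₁.length
  · obtain ⟨⟨j, hj⟩, hji, hij⟩ := h ⟨i, hil⟩ hpos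
    refine ⟨⟨j, by simp; omega⟩, hji, ?_⟩
    simpa [List.getElem_append_left hil, List.getElem_append_left hj] using hij
  · obtain ⟨j, hj, rfl⟩ := List.getElem_of_mem hu
    refine ⟨⟨j, by simp; omega⟩, by simp; omega, ?_⟩
    simp only [List.get_eq_getElem, List.getElem_append_left hj,
      List.getElem_append_right (not_lt.1 hil)]
    exact hadj _ (List.getElem_mem _)

end ConnectedOrder

theorem List.mem_take_finRange {n m : ℕ} (i : Fin n) :
    i ∈ (List.finRange n).take m ↔ (i : ℕ) < m := by
  rw [List.mem_take_iff_getElem]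
  simp [Fin.ext_iff]

theorem List.mem_drop_finRange {n m : ℕ} (i : Fin n) :
    i ∈ (List.finRange n).drop m ↔ m ≤ (i : ℕ) := by
  rw [List.mem_drop_iff_getElem]
  simp only [List.getElem_finRange, Fin.ext_iff, List.length_finRange]
  exact ⟨fun ⟨j, _, h⟩ => h ▸ Nat.le_add_right m j, fun h => ⟨i - m, by omega, by simp; omega⟩⟩

namespace G5

open G5Vert

variable {k : ℕ}

theorem neighborSet_p : (G5 k).neighborSet p = insert x (Set.range P) := by
  ext u; cases u <;> simp [G5]

theorem neighborSet_x : (G5 k).neighborSet x = {p, y} ∪ Set.range P := by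
  ext u; cases u <;> simp [G5]

theorem neighborSet_y : (G5 k).neighborSet y = {x, z} ∪ Set.range P := by
  ext u; cases u <;> simp [G5]

theorem neighborSet_z : (G5 k).neighborSet z = insert y (Set.range P ∪ Set.range Q) := by
  ext u; cases u <;> simp [G5]

theorem neighborSet_q : (G5 k).neighborSet q = Set.range Q := by
  ext u; cases u <;> simp [G5]

theorem adj_P_iff {i : Fin (k - 1)} {u : G5Vert k} :
    (G5 k).Adj (P i) u ↔ u = p ∨ u = x ∨ u = y ∨ u = z ∨ ∃ j, j ≠ i ∧ u = P j := by
  cases u <;> simp [G5, eq_comm]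

theorem adj_Q_iff {i : Fin k} {u : G5Vert k} :
    (G5 k).Adj (Q i) u ↔ u = z ∨ u = q ∨ ∃ j, j ≠ i ∧ u = Q j := by
  cases u <;> simp [G5, eq_comm]

def firstPs (k m : ℕ) : List (G5Vert k) := ((List.finRange (k - 1)).take m).map P

def restPs (k m : ℕ) : List (G5Vert k) := ((List.finRange (k - 1)).drop m).map P

def allQs (k : ℕ) : List (G5Vert k) := (List.finRange k).map Q

def orderFromP (k m : ℕ) : List (G5Vert k) :=
  firstPs k m ++ [x, y, z] ++ restPs k m ++ allQs k ++ [q]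

def orderFromQ (k m : ℕ) : List (G5Vert k) :=
  allQs k ++ [z] ++ firstPs k m ++ [y, x, p] ++ restPs k m

@[simp] theorem mem_firstPs {m : ℕ} {u : G5Vert k} :
    u ∈ firstPs k m ↔ ∃ i : Fin (k - 1), (i : ℕ) < m ∧ P i = u := by
  simp only [firstPs, List.mem_map, List.mem_take_finRange]

@[simp] theorem mem_restPs {m : ℕ} {u : G5Vert k} :
    u ∈ restPs k m ↔ ∃ i : Fin (k - 1), m ≤ (i : ℕ) ∧ P i = u := by
  simp only [restPs, List.mem_map, List.mem_drop_finRange]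

@[simp] theorem mem_allQs {u : G5Vert k} : u ∈ allQs k ↔ ∃ i, Q i = u := by
  simp [allQs]

theorem P_injective : Function.Injective (P : Fin (k - 1) → G5Vert k) := fun _ _ h => by
  injection h

@[simp] theorem nodup_firstPs (m : ℕ) : (firstPs k m).Nodup :=
  ((List.nodup_finRange _).sublist (List.take_sublist _ _)).map P_injective

@[simp] theorem nodup_restPs (m : ℕ) : (restPs k m).Nodup :=
  ((List.nodup_finRange _).sublist (List.drop_sublist _ _)).map P_injective

@[simp] theorem nodup_allQs : (allQs k).Nodup :=
  (List.nodup_finRange _).map fun _ _ h => by injection h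

theorem isConnectedOrder_orderFromP (hk : 0 < k) (m : ℕ) :
    IsConnectedOrder (G5 k) (p :: orderFromP k m) := by
  refine ⟨?_, fun w => ?_, ?_⟩
  · simp [orderFromP, List.nodup_append, or_imp, forall_and]
    grind
  · cases w <;> simp [orderFromP]
    omega
  · change HasEarlierNeighbours _ _
    rw [show p :: orderFromP k m
        = [p] ++ firstPs k m ++ [x] ++ [y] ++ [z] ++ restPs k m ++ allQs k ++ [q] by
      simp [orderFromP]]
    refine .append_of_adj (u := Q ⟨0, hk⟩) ?_ (by simp) (by simp [G5])
    refine .append_of_adj (u := z) ?_ (by simp) (by simp [G5])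
    refine .append_of_adj (u := p) ?_ (by simp) (by simp [G5])
    refine .append_of_adj (u := y) ?_ (by simp) (by simp [G5])
    refine .append_of_adj (u := x) ?_ (by simp) (by simp [G5])
    refine .append_of_adj (u := p) ?_ (by simp) (by simp [G5])
    refine .append_of_adj (u := p) ?_ (by simp) (by simp [G5])
    exact hasEarlierNeighbours_singleton _ p

theorem isConnectedOrder_orderFromQ (hk : 0 < k) (m : ℕ) :
    IsConnectedOrder (G5 k) (q :: orderFromQ k m) := by
  refine ⟨?_, fun w => ?_, ?_⟩
  · simp [orderFromQ, List.nodup_append, or_imp, forall_and]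
    grind
  · cases w <;> simp [orderFromQ]
    omega
  · change HasEarlierNeighbours _ _
    rw [show q :: orderFromQ k m
        = [q] ++ allQs k ++ [z] ++ firstPs k m ++ [y] ++ [x] ++ [p] ++ restPs k m by
      simp [orderFromQ]]
    refine .append_of_adj (u := z) ?_ (by simp) (by simp [G5])
    refine .append_of_adj (u := x) ?_ (by simp) (by simp [G5])
    refine .append_of_adj (u := y) ?_ (by simp) (by simp [G5])
    refine .append_of_adj (u := z) ?_ (by simp) (by simp [G5])
    refine .append_of_adj (u := z) ?_ (by simp) (by simp [G5])
    refine .append_of_adj (u := Q ⟨0, hk⟩) ?_ (by simp) (by simp [G5])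
    refine .append_of_adj (u := q) ?_ (by simp) (by simp [G5])
    exact hasEarlierNeighbours_singleton _ q

theorem image_greedyFrom_firstPs {g : G5Vert k → ℕ} {a m : ℕ} (ha : 0 < a) (hm : m ≤ k - 1)
    (hP : ∀ i, g (P i) = 0) (hpxyz : ∀ w ∈ [p, x, y, z], g w = 0 ∨ g w = a)
    (hseen : g p = a ∨ g z = a) :
    greedyFrom (G5 k) g (firstPs k m) '' Set.range P \ {0} = firstColorsExcept a m := by
  have hcl : (firstPs k m).Pairwise (G5 k).Adj := by
    refine (nodup_firstPs m).pairwise_of_forall_ne fun u hu v hv huv => ?_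
    obtain ⟨i, -, rfl⟩ := mem_firstPs.1 hu
    obtain ⟨j, -, rfl⟩ := mem_firstPs.1 hv
    simpa [G5] using huv
  have himage := image_greedyFrom_clique (G5 k) (nodup_firstPs m) hcl (f := g) ha
    (by simp [hP])
    (fun v hv u hvu hu => by
      obtain ⟨i, -, rfl⟩ := mem_firstPs.1 hv
      rcases adj_P_iff.1 hvu with rfl | rfl | rfl | rfl | ⟨j, -, rfl⟩ <;> simp_all)
    (fun v hv => by
      obtain ⟨i, -, rfl⟩ := mem_firstPs.1 hv
      rcases hseen with h | h
      · exact ⟨p, by simp [G5], h⟩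
      · exact ⟨z, by simp [G5], h⟩)
  have hlen : (firstPs k m).length = m := by simp [firstPs]; omega
  rw [image_sdiff_zero_of_subset (L := {v | v ∈ firstPs k m}), himage, hlen]
  · simp [firstColorsExcept]
  · simp [Set.subset_def]
  · rintro _ ⟨i, rfl⟩ hi
    rw [greedyFrom_of_notMem _ _ hi, hP]

theorem image_greedyFrom_allQs {g : G5Vert k → ℕ} {b : ℕ} (hb : 0 < b)
    (hQ : ∀ i, g (Q i) = 0) (hzq : ∀ w ∈ [z, q], g w = 0 ∨ g w = b)
    (hseen : g z = b ∨ g q = b) :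
    greedyFrom (G5 k) g (allQs k) '' Set.range Q = firstColorsExcept b k := by
  have hcl : (allQs k).Pairwise (G5 k).Adj := by
    refine nodup_allQs.pairwise_of_forall_ne fun u hu v hv huv => ?_
    obtain ⟨i, rfl⟩ := mem_allQs.1 hu
    obtain ⟨j, rfl⟩ := mem_allQs.1 hv
    simpa [G5] using huv
  have himage := image_greedyFrom_clique (G5 k) nodup_allQs hcl (f := g) hb
    (by simp [hQ])
    (fun v hv u hvu hu => by
      obtain ⟨i, rfl⟩ := mem_allQs.1 hv
      rcases adj_Q_iff.1 hvu with rfl | rfl | ⟨j, -, rfl⟩ <;> simp_all)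
    (fun v hv => by
      obtain ⟨i, rfl⟩ := mem_allQs.1 hv
      rcases hseen with h | h
      · exact ⟨z, by simp [G5], h⟩
      · exact ⟨q, by simp [G5], h⟩)
  have hrange : {v | v ∈ allQs k} = Set.range Q := by ext; simp
  rwa [hrange, show (allQs k).length = k by simp [allQs]] at himage

theorem numBelowExcept_le {α β : ℕ} (hα : α ≤ k + 1) (hβ : β ≤ k + 1) (hαβ : α ≠ β) :
    numBelowExcept α β ≤ k - 1 := by
  unfold numBelowExcept
  split_ifs <;> omega

theorem greedyFrom_orderFromP_q {α β : ℕ} (hα : 0 < α) (hβ : 0 < β) (hαk : α ≤ k + 1)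
    (hβk : β ≤ k + 1) (hαβ : α ≠ β) :
    greedyFrom (G5 k) (Function.update (fun _ => 0) p α)
      (orderFromP k (numBelowExcept α β)) q = β := by
  set m := numBelowExcept α β
  set f₀ : G5Vert k → ℕ := Function.update (fun _ => 0) p α
  set g₁ := greedyFrom (G5 k) f₀ (firstPs k m)
  set g₂ := greedyFrom (G5 k) g₁ [x, y, z]
  set g₃ := greedyFrom (G5 k) g₂ (restPs k m)
  have hP₁ : g₁ '' Set.range P \ {0} = belowExcept α β := by
    rw [image_greedyFrom_firstPs hα (numBelowExcept_le hαk hβk hαβ) (by simp [f₀])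
      (by simp [f₀]) (by simp [f₀]), firstColorsExcept_numBelowExcept hα]
  have hz₂ : g₂ z = β :=
    greedyFrom_path_of_common_neighbours (G5 k) hα hβ hαβ neighborSet_x neighborSet_y
      neighborSet_z (by simp) (by simp) (by simp) (by simp [g₁, f₀, greedyFrom_of_notMem])
      (by simp [g₁, f₀, greedyFrom_of_notMem]) (by simp [g₁, f₀, greedyFrom_of_notMem]) hP₁
      (by simp [g₁, f₀, greedyFrom_of_notMem])
  have hQ₄ : greedyFrom (G5 k) g₃ (allQs k) '' Set.range Q = firstColorsExcept β k := by
    refine image_greedyFrom_allQs hβ ?_ ?_ ?_ <;>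
      simp [g₃, g₂, g₁, f₀, greedyFrom_of_notMem, hz₂]
  rw [orderFromP, greedyFrom_append, greedyFrom_append, greedyFrom_append, greedyFrom_append]
  change greedyStep (G5 k) (greedyFrom (G5 k) g₃ (allQs k)) q q = β
  rw [greedyStep_self, neighborSet_q, hQ₄, firstFree_firstColorsExcept hβ hβk]

theorem greedyFrom_orderFromQ_p {α β : ℕ} (hα : 0 < α) (hβ : 0 < β) (hαk : α ≤ k + 1)
    (hβk : β ≤ k + 1) (hαβ : α ≠ β) :
    greedyFrom (G5 k) (Function.update (fun _ => 0) q β)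
      (orderFromQ k (numBelowExcept β α)) p = α := by
  set m := numBelowExcept β α
  set f₀ : G5Vert k → ℕ := Function.update (fun _ => 0) q β
  set g₁ := greedyFrom (G5 k) f₀ (allQs k)
  have hQ₁ : g₁ '' Set.range Q = firstColorsExcept β k :=
    image_greedyFrom_allQs hβ (by simp [f₀]) (by simp [f₀]) (by simp [f₀])
  have hz₂ : greedyStep (G5 k) g₁ z z = β := by
    rw [greedyStep_self, ← firstFree_sdiff_zero, image_sdiff_zero_of_subset (L := Set.range Q),
      hQ₁, Set.sdiff_singleton_eq_self (by simp [firstColorsExcept]),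
      firstFree_firstColorsExcept hβ hβk]
    · exact neighborSet_z ▸ Set.subset_union_right.trans (Set.subset_insert _ _)
    · rintro v hv hvQ
      have hvq : v ≠ q := by rintro rfl; simp [neighborSet_z] at hv
      exact (greedyFrom_of_notMem (G5 k) f₀ (by simpa using hvQ)).trans (by simp [f₀, hvq])
  set g₂ := greedyStep (G5 k) g₁ z
  set g₃ := greedyFrom (G5 k) g₂ (firstPs k m)
  have hP₃ : g₃ '' Set.range P \ {0} = belowExcept β α := by
    rw [image_greedyFrom_firstPs hβ (numBelowExcept_le hβk hαk hαβ.symm) ?_ ?_ ?_,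
      firstColorsExcept_numBelowExcept hβ] <;>
    simp [g₂, g₁, f₀, greedyFrom_of_notMem, greedyStep_of_ne, hz₂]
  have hp : greedyFrom (G5 k) g₃ [y, x, p] p = α :=
    greedyFrom_path_of_common_neighbours (G5 k) hβ hα hαβ.symm
      (neighborSet_y.trans (by rw [Set.pair_comm])) (neighborSet_x.trans (by rw [Set.pair_comm]))
      (by rw [Set.union_empty]; exact neighborSet_p) (by simp) (by simp) (by simp)
      (by simp [g₃, g₂, greedyFrom_of_notMem, hz₂])
      (by simp [g₃, g₂, g₁, f₀, greedyFrom_of_notMem, greedyStep_of_ne])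
      (by simp [g₃, g₂, g₁, f₀, greedyFrom_of_notMem, greedyStep_of_ne]) hP₃ (by simp)
  rw [orderFromQ, greedyFrom_append, greedyFrom_of_notMem _ _ (by simp), greedyFrom_append,
    greedyFrom_append, greedyFrom_append]
  exact hp

end G5

theorem statement7 (k : ℕ) (hk : 3 ≤ k) (α β : ℕ)
    (hα : α ∈ Finset.Icc 1 (k + 1)) (hβ : β ∈ Finset.Icc 1 (k + 1)) (hαβ : α ≠ β) :
    (∃ f : G5Vert k → ℕ, IsCGCFrom (G5 k) G5Vert.p α f ∧ f G5Vert.q = β) ∧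
    (∃ f : G5Vert k → ℕ, IsCGCFrom (G5 k) G5Vert.q β f ∧ f G5Vert.p = α) := by
  rw [Finset.mem_Icc] at hα hβ
  refine ⟨⟨_, ⟨_, G5.isConnectedOrder_orderFromP (by omega) (numBelowExcept α β), rfl⟩, ?_⟩,
    ⟨_, ⟨_, G5.isConnectedOrder_orderFromQ (by omega) (numBelowExcept β α), rfl⟩, ?_⟩⟩
  · exact G5.greedyFrom_orderFromP_q hα.1 hβ.1 hα.2 hβ.2 hαβ
  · exact G5.greedyFrom_orderFromQ_p hα.1 hβ.1 hα.2 hβ.2 hαβ
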